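/- The absolute value equation Ax - |x| = b has a unique solution for every right-hand side b ∈ ℝ^n if and only if the system |Ax| ≤ |x| (componentwise) has only the trivial solution x = 0. -/

import Mathlib

open Matrix Filter

/-- Componentwise absolute value of a vector. -/
noncomputable def absv {n : ℕ} (x : Fin n → ℝ) : Fin n → ℝ := fun i => |x i|

/-- Euclidean norm of a vector. -/
noncomputable def enormE {n : ℕ} (x : Fin n → ℝ) : ℝ := Real.sqrt (∑ i, x i ^ 2)

/-- Largest singular value (spectral / operator 2-norm). -/
noncomputable def sigmaMax {n : ℕ} (A : Matrix (Fin n) (Fin n) ℝ) : ℝ :=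
  sSup {r | ∃ x : Fin n → ℝ, enormE x = 1 ∧ r = enormE (A.mulVec x)}

/-- Smallest singular value. -/
noncomputable def sigmaMin {n : ℕ} (A : Matrix (Fin n) (Fin n) ℝ) : ℝ :=
  sInf {r | ∃ x : Fin n → ℝ, enormE x = 1 ∧ r = enormE (A.mulVec x)}

/-- Spectral radius of a real matrix (via its complex spectrum). -/
noncomputable def specRad {n : ℕ} (A : Matrix (Fin n) (Fin n) ℝ) : ENNReal :=
  spectralRadius ℂ (A.map (Complex.ofReal ·))


lemma ave_transpose {n : ℕ} (A : Matrix (Fin n) (Fin n) ℝ)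
    (H : ∀ x : Fin n → ℝ, (∀ i, |A.mulVec x i| ≤ |x i|) → x = 0) :
    ∀ y : Fin n → ℝ, (∀ i, |Aᵀ.mulVec y i| ≤ |y i|) → y = 0 := by
  intro y hy
  by_contra hy0
  set d : Fin n → ℝ := fun i => if y i = 0 then 0 else Aᵀ.mulVec y i / y i with hd
  have hd1 : ∀ i, |d i| ≤ 1 := by
    intro i
    by_cases h : y i = 0
    · simp [hd, h]
    · have hyi : 0 < |y i| := abs_pos.mpr h
      simp only [hd, h, if_false, abs_div]
      rw [div_le_one hyi]
      exact hy i
  have hker : (Aᵀ - diagonal d).mulVec y = 0 := by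
    funext i
    rw [sub_mulVec]
    simp only [Pi.sub_apply, Pi.zero_apply, mulVec_diagonal]
    by_cases h : y i = 0
    · have : |Aᵀ.mulVec y i| ≤ 0 := by simpa [h] using hy i
      have h2 : Aᵀ.mulVec y i = 0 :=
        abs_eq_zero.mp (le_antisymm this (abs_nonneg _))
      simp [h, h2]
    · simp only [hd, h, if_false]
      field_simp
      ring
  have hdet : (Aᵀ - diagonal d).det = 0 :=
    exists_mulVec_eq_zero_iff.mp ⟨y, hy0, hker⟩
  have hdet2 : (A - diagonal d).det = 0 := by
    have : (A - diagonal d)ᵀ = Aᵀ - diagonal d := by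
      rw [transpose_sub, diagonal_transpose]
    rw [← det_transpose, this, hdet]
  obtain ⟨x, hx0, hx⟩ := exists_mulVec_eq_zero_iff.mpr hdet2
  have hAx : ∀ i, A.mulVec x i = d i * x i := by
    intro i
    have := congrFun hx i
    rw [sub_mulVec] at this
    simp only [Pi.sub_apply, Pi.zero_apply, mulVec_diagonal] at this
    linarith
  exact hx0 (H x (fun i => by
    rw [hAx i, abs_mul]
    calc |d i| * |x i| ≤ 1 * |x i| := by
          exact mul_le_mul_of_nonneg_right (hd1 i) (abs_nonneg _)
      _ = |x i| := one_mul _))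
lemma ave_exists {n : ℕ} (A : Matrix (Fin n) (Fin n) ℝ)
    (H : ∀ x : Fin n → ℝ, (∀ i, |A.mulVec x i| ≤ |x i|) → x = 0)
    (b : Fin n → ℝ) : ∃ x : Fin n → ℝ, A.mulVec x - absv x = b := by
  rcases Nat.eq_zero_or_pos n with hn | hn
  · subst hn; exact ⟨0, funext fun i => i.elim0⟩
  haveI : Nonempty (Fin n) := ⟨⟨0, hn⟩⟩
  set F : (Fin n → ℝ) → (Fin n → ℝ) := fun x => A.mulVec x - absv x with hF
  -- continuity of components
  have contF : ∀ i, Continuous fun x : Fin n → ℝ => F x i := by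
    intro i
    have h1 : Continuous fun x : Fin n → ℝ => A.mulVec x i := by
      simp only [Matrix.mulVec, dotProduct]
      exact continuous_finset_sum _ fun j _ => continuous_const.mul (continuous_apply j)
    simp only [hF, Pi.sub_apply, absv]
    exact h1.sub (continuous_apply i).abs
  -- homogeneity
  have hhom : ∀ (c : ℝ), 0 ≤ c → ∀ x i, F (c • x) i = c * F x i := by
    intro c hc x i
    simp only [hF, Pi.sub_apply, absv, mulVec_smul, Pi.smul_apply, smul_eq_mul,
      abs_mul, abs_of_nonneg hc]
    ring
  -- minimum of ∑ (F x i)^2 on the unit sphere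
  obtain ⟨u, humem, humin⟩ :=
    (isCompact_sphere (0 : Fin n → ℝ) 1).exists_isMinOn
      (⟨fun _ => (1:ℝ), by simp [mem_sphere_zero_iff_norm]⟩ : Set.Nonempty _)
      ((continuous_finset_sum _ fun i _ => ((contF i).pow 2)).continuousOn)
  set c0 : ℝ := ∑ i, (F u i)^2 with hc0def
  have hc0 : 0 < c0 := by
    rcases lt_or_eq_of_le (Finset.sum_nonneg fun i _ => sq_nonneg (F u i)) with h | h
    · exact h
    exfalso
    have hz : ∀ i ∈ Finset.univ, (F u i)^2 = 0 := by
      rw [← Finset.sum_eq_zero_iff_of_nonneg (fun i _ => sq_nonneg (F u i))]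
      exact h.symm
    have hu0 : u = 0 := by
      apply H
      intro i
      have := pow_eq_zero_iff (n := 2) (by norm_num) |>.mp (hz i (Finset.mem_univ i))
      simp only [hF, Pi.sub_apply, absv] at this
      have : A.mulVec u i = |u i| := by linarith
      rw [this, abs_abs]
    have := mem_sphere_zero_iff_norm.mp humem
    rw [hu0] at this
    simp at this
  -- coercivity bound
  have Sbound : ∀ x : Fin n → ℝ, c0 * ‖x‖^2 ≤ ∑ i, (F x i)^2 := by
    intro x
    by_cases hx : x = 0
    · subst hx
      have : ∀ i, F (0 : Fin n → ℝ) i = 0 := by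
        intro i; simp [hF, absv]
      simp [this]
    · have hcpos : 0 < ‖x‖ := norm_pos_iff.mpr hx
      set u' : Fin n → ℝ := ‖x‖⁻¹ • x with hu'
      have hu'mem : u' ∈ Metric.sphere (0 : Fin n → ℝ) 1 := by
        rw [mem_sphere_zero_iff_norm, hu', norm_smul, norm_inv, norm_norm]
        field_simp
      have hxu : x = ‖x‖ • u' := by
        rw [hu', smul_inv_smul₀ (ne_of_gt hcpos)]
      have hFx : ∀ i, F x i = ‖x‖ * F u' i := by
        intro i
        conv_lhs => rw [hxu]
        rw [hhom _ (le_of_lt hcpos) u' i]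
      have key : ∑ i, (F x i)^2 = ‖x‖^2 * ∑ i, (F u' i)^2 := by
        rw [Finset.mul_sum]
        apply Finset.sum_congr rfl
        intro i _
        rw [hFx i]
        ring
      have := humin hu'mem
      simp only [hc0def] at *
      calc c0 * ‖x‖^2 ≤ (∑ i, (F u' i)^2) * ‖x‖^2 := by
            apply mul_le_mul_of_nonneg_right _ (sq_nonneg _)
            exact this
        _ = ∑ i, (F x i)^2 := by rw [key]; ring
  -- the objective function
  set g : (Fin n → ℝ) → ℝ := fun x => ∑ i, (F x i - b i)^2 with hg
  have contg : Continuous g :=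
    continuous_finset_sum _ fun i _ => (((contF i).sub continuous_const).pow 2)
  set K : ℝ := ∑ i, (b i)^2 with hK
  have glb : ∀ x, c0/2 * ‖x‖^2 - K ≤ g x := by
    intro x
    have h1 : ∑ i, ((F x i)^2/2 - (b i)^2) ≤ g x := by
      apply Finset.sum_le_sum
      intro i _
      nlinarith [sq_nonneg (F x i - 2 * b i)]
    have h2 : ∑ i, ((F x i)^2/2 - (b i)^2)
        = (∑ i, (F x i)^2)/2 - K := by
      rw [Finset.sum_sub_distrib, Finset.sum_div, hK]
    have := Sbound x
    linarith
  have htend : Tendsto g (cocompact (Fin n → ℝ)) atTop := by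
    apply tendsto_atTop_mono glb
    have h1 : Tendsto (fun r : ℝ => c0/2 * r^2 - K) atTop atTop := by
      apply tendsto_atTop_add_const_right
      exact (tendsto_pow_atTop (two_ne_zero)).const_mul_atTop (by linarith)
    exact h1.comp tendsto_norm_cocompact_atTop
  obtain ⟨xs, hxs⟩ := contg.exists_forall_le htend
  set r : Fin n → ℝ := fun i => F xs i - b i with hr
  set w : Fin n → ℝ := Aᵀ.mulVec r with hw
  have hwi : ∀ i, w i = ∑ j, A j i * r j := by
    intro i
    simp [hw, Matrix.mulVec, dotProduct, Matrix.transpose_apply]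
  -- stationarity
  have stat : ∀ (i : Fin n) (s sg t0 : ℝ), 0 < t0 →
      (∀ t : ℝ, 0 < t → t < t0 → |xs i + t * s| = |xs i| + t * sg) →
      0 ≤ s * w i - sg * r i := by
    intro i s sg t0 ht0 habs
    set G : Fin n → ℝ := fun j => s * A j i - (if j = i then sg else 0) with hG
    set P : ℝ := ∑ j, r j * G j with hP
    set Q : ℝ := ∑ j, (G j)^2 with hQ
    have hQ0 : 0 ≤ Q := Finset.sum_nonneg fun j _ => sq_nonneg _
    have hkey : ∀ t : ℝ, 0 < t → t < t0 → 0 ≤ 2*P + t*Q := by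
      intro t ht1 ht2
      set δ : Fin n → ℝ := Pi.single i (t*s) with hδ
      have hpt := hxs (xs + δ)
      have hmv : ∀ j, A.mulVec (xs + δ) j = A.mulVec xs j + t * s * A j i := by
        intro j
        rw [mulVec_add, hδ, mulVec_single]
        simp only [Pi.add_apply, Pi.smul_apply, Matrix.col, Matrix.transpose_apply, op_smul_eq_mul]
        ring
      have habs' : ∀ j, |(xs + δ) j| = |xs j| + (if j = i then t * sg else 0) := by
        intro j
        by_cases hj : j = i
        · subst hj
          simp only [Pi.add_apply, hδ, Pi.single_eq_same, if_pos]
          exact habs t ht1 ht2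
        · simp [hδ, Pi.single_eq_of_ne hj, hj]
      have hcomp : ∀ j, F (xs + δ) j - b j = r j + t * G j := by
        intro j
        have h1 : F (xs + δ) j = A.mulVec (xs + δ) j - |(xs + δ) j| := by
          simp [hF, absv]
        have h2 : r j = A.mulVec xs j - |xs j| - b j := by
          simp [hr, hF, absv]
        rw [h1, hmv j, habs' j, h2, hG]
        by_cases hj : j = i <;> simp [hj] <;> ring
      have hgval : g (xs + δ) = ∑ j, (r j + t * G j)^2 := by
        rw [hg]
        exact Finset.sum_congr rfl fun j _ => by rw [hcomp j]
      have hexp : ∑ j, (r j + t * G j)^2 = (∑ j, (r j)^2) + t * (2*P + t*Q) := by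
        have e1 : ∀ j ∈ Finset.univ, (r j + t * G j)^2
            = (r j)^2 + ((2*t) * (r j * G j) + t^2 * (G j)^2) := by
          intro j _; ring
        rw [Finset.sum_congr rfl e1, Finset.sum_add_distrib, Finset.sum_add_distrib,
          ← Finset.mul_sum, ← Finset.mul_sum, ← hP, ← hQ]
        ring
      have hgxs : g xs = ∑ j, (r j)^2 := rfl
      have h0 : 0 ≤ t * (2*P + t*Q) := by
        have := hpt
        rw [hgval, hexp, hgxs] at this
        linarith
      by_contra hneg
      push_neg at hneg
      have : t * (2*P + t*Q) < 0 := mul_neg_of_pos_of_neg ht1 hneg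
      linarith
    -- limit t → 0⁺
    have hP0 : 0 ≤ P := by
      by_contra hPneg
      push_neg at hPneg
      set t : ℝ := min (t0/2) (-P/(Q+1)) with ht
      have htpos : 0 < t :=
        lt_min (by linarith) (div_pos (by linarith) (by linarith))
      have htlt : t < t0 := lt_of_le_of_lt (min_le_left _ _) (by linarith)
      have h1 := hkey t htpos htlt
      have h2 : t ≤ -P/(Q+1) := min_le_right _ _
      have h3 : t * (Q+1) ≤ -P := (le_div_iff₀ (by linarith)).mp h2
      nlinarith
    -- compute P
    have hPval : P = s * w i - sg * r i := by
      rw [hP, hG, hwi i]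
      have e1 : ∀ j ∈ Finset.univ, r j * (s * A j i - (if j = i then sg else 0))
          = s * (A j i * r j) - (if j = i then r j * sg else 0) := by
        intro j _
        by_cases hj : j = i <;> simp [hj] <;> ring
      rw [Finset.sum_congr rfl e1, Finset.sum_sub_distrib, ← Finset.mul_sum,
        Finset.sum_ite_eq' Finset.univ i (fun j => r j * sg)]
      simp [mul_comm]
    linarith [hPval ▸ hP0]
  -- derive |Aᵀ r| ≤ |r|
  have habsle : ∀ i, |Aᵀ.mulVec r i| ≤ |r i| := by
    intro i
    rw [← hw]
    by_cases hz : xs i = 0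
    · have habs1 : ∀ t : ℝ, 0 < t → t < 1 → |xs i + t * 1| = |xs i| + t * 1 := by
        intro t ht _; rw [hz]; simp [abs_of_pos ht]
      have habs2 : ∀ t : ℝ, 0 < t → t < 1 → |xs i + t * (-1)| = |xs i| + t * 1 := by
        intro t ht _; rw [hz]; simp [abs_of_pos ht]
      have s1 := stat i 1 1 1 one_pos habs1
      have s2 := stat i (-1) 1 1 one_pos habs2
      have : |w i| ≤ -r i := abs_le.mpr ⟨by linarith, by linarith⟩
      exact le_trans this (neg_le_abs _)
    · set σ : ℝ := if 0 < xs i then 1 else -1 with hσ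
      have habsgen : ∀ s : ℝ, s = 1 ∨ s = -1 → ∀ t : ℝ, 0 < t → t < |xs i| →
          |xs i + t * s| = |xs i| + t * (s * σ) := by
        intro s hs t ht htl
        by_cases hpos : 0 < xs i
        · rw [hσ, if_pos hpos]
          rw [abs_of_pos hpos] at htl
          rw [abs_of_pos hpos, abs_of_pos]
          · ring
          · rcases hs with h | h <;> rw [h] <;> linarith
        · have hneg : xs i < 0 := lt_of_le_of_ne (not_lt.mp hpos) hz
          rw [hσ, if_neg hpos]
          rw [abs_of_neg hneg] at htl
          rw [abs_of_neg hneg, abs_of_neg]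
          · ring
          · rcases hs with h | h <;> rw [h] <;> linarith
      have ht0pos : 0 < |xs i| := abs_pos.mpr hz
      have s1 := stat i 1 σ |xs i| ht0pos (by
        intro t ht htl
        have := habsgen 1 (Or.inl rfl) t ht htl
        simpa using this)
      have s2 := stat i (-1) (-σ) |xs i| ht0pos (by
        intro t ht htl
        have := habsgen (-1) (Or.inr rfl) t ht htl
        simpa using this)
      have hwe : w i = σ * r i := by linarith
      rw [hwe, abs_mul, hσ]
      by_cases hpos : 0 < xs i <;> simp [hpos]
  have hr0 : r = 0 := ave_transpose A H r habsle
  refine ⟨xs, funext fun i => ?_⟩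
  have := congrFun hr0 i
  simp only [hr, Pi.zero_apply] at this
  have : F xs i = b i := by linarith
  simpa [hF] using this

lemma ave_forward {n : ℕ} (A : Matrix (Fin n) (Fin n) ℝ)
    (Hu : ∀ b : Fin n → ℝ, ∃! x : Fin n → ℝ, A.mulVec x - absv x = b) :
    ∀ x : Fin n → ℝ, (∀ i, |A.mulVec x i| ≤ |x i|) → x = 0 := by
  intro x hx
  set v : Fin n → ℝ := A.mulVec x with hv
  set y : Fin n → ℝ := fun i => if x i = 0 then 0 else ((v i / |x i|) - 1)/2 * x i with hy
  -- key componentwise identity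
  have key : ∀ i, |y i + x i| - |y i| = v i := by
    intro i
    by_cases h : x i = 0
    · have : |v i| ≤ 0 := by simpa [h] using hx i
      have hv0 : v i = 0 := abs_eq_zero.mp (le_antisymm this (abs_nonneg _))
      simp [hy, h, hv0]
    · have ha : 0 < |x i| := abs_pos.mpr h
      have hvb : |v i| ≤ |x i| := hx i
      set t : ℝ := ((v i / |x i|) - 1)/2 with ht
      have ht0 : t ≤ 0 := by
        have : v i / |x i| ≤ 1 := by
          rw [div_le_one ha]; exact le_trans (le_abs_self _) hvb
        rw [ht]; linarith
      have ht1 : -1 ≤ t := by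
        have : -1 ≤ v i / |x i| := by
          rw [le_div_iff₀ ha, neg_mul, one_mul, neg_le]
          exact le_trans (neg_le_abs _) hvb
        rw [ht]; linarith
      have hyi : y i = t * x i := by simp [hy, h, ht]
      have h1 : |y i + x i| = (t + 1) * |x i| := by
        rw [hyi]
        have : t * x i + x i = (t + 1) * x i := by ring
        rw [this, abs_mul, abs_of_nonneg (by linarith : (0:ℝ) ≤ t + 1)]
      have h2 : |y i| = -t * |x i| := by
        rw [hyi, abs_mul, abs_of_nonpos ht0]
      rw [h1, h2]
      have e1 : 2 * t + 1 = v i / |x i| := by rw [ht]; ring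
      have : (2 * t + 1) * |x i| = v i := by
        rw [e1, div_mul_cancel₀ _ (ne_of_gt ha)]
      linarith [this]
  -- F (y + x) = F y
  have hFeq : A.mulVec (y + x) - absv (y + x) = A.mulVec y - absv y := by
    funext i
    rw [mulVec_add]
    simp only [Pi.sub_apply, Pi.add_apply, absv]
    linarith [key i]
  obtain ⟨z, hz, huniq⟩ := Hu (A.mulVec y - absv y)
  have h1 : y + x = z := huniq _ hFeq
  have h2 : y = z := huniq _ rfl
  have : y + x = y := h1.trans h2.symm
  funext i
  have := congrFun this i
  simp only [Pi.add_apply] at this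
  simpa using this

theorem stmt7 {n : ℕ} (A : Matrix (Fin n) (Fin n) ℝ) :
    (∀ b : Fin n → ℝ, ∃! x : Fin n → ℝ, A.mulVec x - absv x = b) ↔
      (∀ x : Fin n → ℝ, (∀ i, |A.mulVec x i| ≤ |x i|) → x = 0) := by
  constructor
  · exact ave_forward A
  · intro H b
    obtain ⟨x, hx⟩ := ave_exists A H b
    refine ⟨x, hx, fun y hy => ?_⟩
    have hsub : y - x = 0 := by
      apply H
      intro i
      have h1 : A.mulVec (y - x) i = absv y i - absv x i := by
        rw [mulVec_sub]
        have := congrFun (hy.trans hx.symm) i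
        simp only [Pi.sub_apply] at this ⊢
        linarith
      rw [h1]
      simpa [absv] using abs_abs_sub_abs_le_abs_sub (y i) (x i)
    have := sub_eq_zero.mp hsub
    exact this
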